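/- arXiv:1810.05991 — 4 statements merged into one kernel-verified Lean document; each statement's English description precedes it below -/
import Mathlib

section
/- With notation as in the induced representation: if b : Γ → ℓᵖ(Γ) is a 1-cocycle for the right regular representation ρ_Γ, Γ is generated by a finite set S, and the OE-cocycle β : Λ × Y → Γ is Lᵖ-integrable (∫_Y |β(λ,y)|^p dν < ∞ for each λ), then B(λ)(y) := b(β(λ⁻¹,y)⁻¹) defines an element B(λ) ∈ Lᵖ(Y, ℓᵖ(Γ)) for each λ ∈ Λ, with ∫_Y ‖B(λ)(y)‖^p dν(y) ≤ (max_{s∈S} ‖b(s)‖^p) ∫_Y |β(λ⁻¹,y)|^p dν(y). -/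
open MeasureTheory
open scoped ENNReal

/-!
A `1`-cocycle `b` for an isometric representation satisfies `‖b (g * h)‖ ≤ ‖b g‖ + ‖b h‖` and
`‖b g⁻¹‖ = ‖b g‖`, so along a shortest word for `g` one gets `‖b g‖ ≤ |g|_S · max_{s ∈ S} ‖b s‖`.
Raising this to the power `p` at `g = β(λ⁻¹, y)` and integrating over `Y` gives the bound, which
also yields `Lᵖ`-membership; measurability is automatic because `β(λ⁻¹, ·)` takes values in a
countable discrete space.
-/

noncomputable def wordLength {Γ : Type*} [Group Γ] (S : Set Γ) (g : Γ) : ℕ :=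
  sInf {n | ∃ w : List Γ, w.length = n ∧ (∀ x ∈ w, x ∈ S ∨ x⁻¹ ∈ S) ∧ w.prod = g}

theorem Subgroup.exists_list_prod_eq_of_closure_eq_top {Γ : Type*} [Group Γ] {S : Set Γ}
    (hgen : Subgroup.closure S = ⊤) (g : Γ) :
    ∃ w : List Γ, (∀ x ∈ w, x ∈ S ∨ x⁻¹ ∈ S) ∧ w.prod = g := by
  have hg : g ∈ (Subgroup.closure S).toSubmonoid := hgen ▸ Subgroup.mem_top g
  rw [Subgroup.closure_toSubmonoid] at hg
  simpa only [Set.mem_union, Set.mem_inv] using Submonoid.exists_list_of_mem_closure hg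

theorem exists_list_length_eq_wordLength {Γ : Type*} [Group Γ] {S : Set Γ}
    (hgen : Subgroup.closure S = ⊤) (g : Γ) :
    ∃ w : List Γ, w.length = wordLength S g ∧ (∀ x ∈ w, x ∈ S ∨ x⁻¹ ∈ S) ∧ w.prod = g := by
  obtain ⟨w, hw, hprod⟩ := Subgroup.exists_list_prod_eq_of_closure_eq_top hgen g
  exact Nat.sInf_mem (s := {n | ∃ w : List Γ, w.length = n ∧ (∀ x ∈ w, x ∈ S ∨ x⁻¹ ∈ S) ∧
    w.prod = g}) ⟨w.length, w, rfl, hw, hprod⟩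

def IsCocycle {Γ R E : Type*} [Group Γ] [Semiring R] [SeminormedAddCommGroup E] [Module R E]
    (ρ : Γ →* (E ≃ₗᵢ[R] E)) (b : Γ → E) : Prop :=
  ∀ g h : Γ, b (g * h) = b g + ρ g (b h)

namespace IsCocycle

variable {Γ R E : Type*} [Group Γ] [Semiring R] [SeminormedAddCommGroup E] [Module R E]
  {ρ : Γ →* (E ≃ₗᵢ[R] E)} {b : Γ → E}

theorem map_one (hb : IsCocycle ρ b) : b 1 = 0 := by
  simpa using hb 1 1

theorem norm_map_inv (hb : IsCocycle ρ b) (g : Γ) : ‖b g⁻¹‖ = ‖b g‖ := by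
  have h : b g + ρ g (b g⁻¹) = 0 := by rw [← hb, mul_inv_cancel, hb.map_one]
  rw [← (ρ g).norm_map, eq_neg_of_add_eq_zero_right h, norm_neg]

theorem norm_list_prod_le (hb : IsCocycle ρ b) {M : ℝ} :
    ∀ w : List Γ, (∀ x ∈ w, ‖b x‖ ≤ M) → ‖b w.prod‖ ≤ w.length * M
  | [], _ => by simp [hb.map_one]
  | x :: w, hw => by
    rw [List.forall_mem_cons] at hw
    calc ‖b (x :: w).prod‖ = ‖b x + ρ x (b w.prod)‖ := by rw [List.prod_cons, hb]
      _ ≤ ‖b x‖ + ‖b w.prod‖ := (norm_add_le _ _).trans_eq (by rw [(ρ x).norm_map])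
      _ ≤ M + w.length * M := add_le_add hw.1 (hb.norm_list_prod_le w hw.2)
      _ = (x :: w).length * M := by push_cast [List.length_cons]; ring

theorem norm_le_wordLength_mul (hb : IsCocycle ρ b) {S : Set Γ}
    (hgen : Subgroup.closure S = ⊤) {M : ℝ} (hM : ∀ s ∈ S, ‖b s‖ ≤ M) (g : Γ) :
    ‖b g‖ ≤ wordLength S g * M := by
  obtain ⟨w, hlen, hw, rfl⟩ := exists_list_length_eq_wordLength hgen g
  rw [← hlen]
  refine hb.norm_list_prod_le w fun x hx => ?_
  rcases hw x hx with hx | hx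
  · exact hM x hx
  · exact hb.norm_map_inv x ▸ hM _ hx

theorem norm_rpow_le_sup'_mul_wordLength_rpow (hb : IsCocycle ρ b) {S : Finset Γ}
    (hS : S.Nonempty) (hgen : Subgroup.closure (S : Set Γ) = ⊤) {t : ℝ} (ht : 0 ≤ t)
    (g : Γ) :
    ‖b g‖ ^ t ≤ (S.sup' hS fun s => ‖b s‖ ^ t) * (wordLength (S : Set Γ) g : ℝ) ^ t := by
  obtain ⟨s₀, hs₀, hmax⟩ := S.exists_mem_eq_sup' hS fun s => ‖b s‖
  have hM : ∀ s ∈ (S : Set Γ), ‖b s‖ ≤ ‖b s₀‖ := fun s hs => hmax ▸ S.le_sup' (fun s => ‖b s‖) hs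
  calc ‖b g‖ ^ t ≤ ((wordLength (S : Set Γ) g : ℝ) * ‖b s₀‖) ^ t :=
        Real.rpow_le_rpow (norm_nonneg _) (hb.norm_le_wordLength_mul hgen hM g) ht
    _ = ‖b s₀‖ ^ t * (wordLength (S : Set Γ) g : ℝ) ^ t := by
        rw [Real.mul_rpow (Nat.cast_nonneg _) (norm_nonneg _), mul_comm]
    _ ≤ (S.sup' hS fun s => ‖b s‖ ^ t) * (wordLength (S : Set Γ) g : ℝ) ^ t := by
        gcongr
        exact S.le_sup' (fun s => ‖b s‖ ^ t) hs₀

end IsCocycle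

theorem memLp_and_integral_norm_rpow_le {α E : Type*} [MeasurableSpace α] {μ : Measure α}
    [NormedAddCommGroup E] {p : ℝ≥0∞} (hp0 : p ≠ 0) (hp : p ≠ ⊤) {f : α → E} {g : α → ℝ}
    {C : ℝ} (hf : AEStronglyMeasurable f μ) (hg : Integrable g μ)
    (hfg : ∀ᵐ x ∂μ, ‖f x‖ ^ p.toReal ≤ C * g x) :
    MemLp f p μ ∧ ∫ x, ‖f x‖ ^ p.toReal ∂μ ≤ C * ∫ x, g x ∂μ := by
  have hint : Integrable (fun x => ‖f x‖ ^ p.toReal) μ :=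
    (hg.const_mul C).mono' (hf.norm.aemeasurable.pow_const _).aestronglyMeasurable
      (hfg.mono fun x hx => by rwa [Real.norm_of_nonneg (by positivity)])
  exact ⟨(integrable_norm_rpow_iff hf hp0 hp).1 hint,
    (integral_mono_ae hint (hg.const_mul C) hfg).trans_eq (integral_const_mul C _)⟩

theorem induced_cocycle_memLp_general {Γ Λ Y : Type*} [Group Γ] [Group Λ]
    [MeasurableSpace Y] [MeasurableSpace Γ] [MeasurableSingletonClass Γ] [Countable Γ]
    (ν : Measure Y)
    (p : ℝ≥0∞) [Fact (1 ≤ p)] (hp : p ≠ ⊤)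
    (S : Finset Γ) (hS : S.Nonempty) (hgen : Subgroup.closure (S : Set Γ) = ⊤)
    (ρ : Γ →* (lp (fun _ : Γ => ℝ) p ≃ₗᵢ[ℝ] lp (fun _ : Γ => ℝ) p))
    (b : Γ → lp (fun _ : Γ => ℝ) p)
    (hb : ∀ g h : Γ, b (g * h) = b g + ρ g (b h))
    (β : Λ → Y → Γ) (hβmeas : ∀ l : Λ, Measurable (β l))
    (hβint : ∀ l : Λ,
      Integrable (fun y => (wordLength (S : Set Γ) (β l y) : ℝ) ^ p.toReal) ν) :
    ∀ l : Λ, MemLp (fun y => b ((β l⁻¹ y)⁻¹)) p ν ∧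
      ∫ y, ‖b ((β l⁻¹ y)⁻¹)‖ ^ p.toReal ∂ν ≤
        (S.sup' hS fun s => ‖b s‖ ^ p.toReal) *
          ∫ y, (wordLength (S : Set Γ) (β l⁻¹ y) : ℝ) ^ p.toReal ∂ν := by
  intro l
  have hb : IsCocycle ρ b := hb
  have hp0 : p ≠ 0 := (zero_lt_one.trans_le Fact.out).ne'
  refine memLp_and_integral_norm_rpow_le hp0 hp ?_ (hβint l⁻¹) (.of_forall fun y => ?_)
  · exact ((StronglyMeasurable.of_discrete (f := fun g : Γ => b g⁻¹)).comp_measurable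
      (hβmeas l⁻¹)).aestronglyMeasurable
  · rw [hb.norm_map_inv]
    exact hb.norm_rpow_le_sup'_mul_wordLength_rpow hS hgen ENNReal.toReal_nonneg _

/-- If `b : Γ → ℓᵖ(Γ)` is a `1`-cocycle for the right regular representation and the
OE-cocycle `β` is `Lᵖ`-integrable, then `B(λ)(y) := b(β(λ⁻¹,y)⁻¹)` defines an element
of `Lᵖ(Y, ℓᵖ(Γ))`, with
`∫ ‖B(λ)(y)‖^p dν ≤ (max_{s∈S} ‖b(s)‖^p) ∫ |β(λ⁻¹,y)|^p dν`. -/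
theorem induced_cocycle_memLp {Γ Λ Y : Type*} [Group Γ] [Group Λ]
    [MeasurableSpace Y] [MeasurableSpace Γ] [MeasurableSingletonClass Γ] [Countable Γ]
    (ν : Measure Y) [IsProbabilityMeasure ν]
    (p : ℝ≥0∞) [Fact (1 ≤ p)] (hp : p ≠ ⊤)
    (S : Finset Γ) (hS : S.Nonempty) (hgen : Subgroup.closure (S : Set Γ) = ⊤)
    (ρ : Γ →* (lp (fun _ : Γ => ℝ) p ≃ₗᵢ[ℝ] lp (fun _ : Γ => ℝ) p))
    (hρ : ∀ (g : Γ) (ξ : lp (fun _ : Γ => ℝ) p) (γ : Γ), (ρ g ξ : ∀ _ : Γ, ℝ) γ = ξ (γ * g))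
    (b : Γ → lp (fun _ : Γ => ℝ) p)
    (hb : ∀ g h : Γ, b (g * h) = b g + ρ g (b h))
    (β : Λ → Y → Γ) (hβmeas : ∀ l : Λ, Measurable (β l))
    (hβint : ∀ l : Λ,
      Integrable (fun y => (wordLength (S : Set Γ) (β l y) : ℝ) ^ p.toReal) ν) :
    ∀ l : Λ, MemLp (fun y => b ((β l⁻¹ y)⁻¹)) p ν ∧
      ∫ y, ‖b ((β l⁻¹ y)⁻¹)‖ ^ p.toReal ∂ν ≤
        (S.sup' hS fun s => ‖b s‖ ^ p.toReal) *
          ∫ y, (wordLength (S : Set Γ) (β l⁻¹ y) : ℝ) ^ p.toReal ∂ν :=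
  induced_cocycle_memLp_general ν p hp S hS hgen ρ b hb β hβmeas hβint
end

section
/- With notation as above, the map B : Λ → Lᵖ(Y, ℓᵖ(Γ)) defined by B(λ)(y) = b(β(λ⁻¹,y)⁻¹) is a 1-cocycle for the induced representation σ: B(λ₁λ₂) = B(λ₁) + σ(λ₁) B(λ₂) for all λ₁, λ₂ ∈ Λ. -/
open MeasureTheory
open scoped ENNReal

/-- With `B(λ)(y) = b(β(λ⁻¹,y)⁻¹)` and `(σ(λ)φ)(y) = ρ(β(λ⁻¹,y)⁻¹) φ(λ⁻¹·y)`, the cocycle identity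
for `B` is read pointwise, for `ν`-a.e. `y`. -/
theorem induced_cocycle_identity_general {Γ Λ Y : Type*} [Group Γ] [Group Λ] [MulAction Λ Y]
    [MeasurableSpace Y] (ν : Measure Y)
    (p : ℝ≥0∞) [Fact (1 ≤ p)]
    (ρ : Γ →* (lp (fun _ : Γ => ℝ) p ≃ₗᵢ[ℝ] lp (fun _ : Γ => ℝ) p))
    (b : Γ → lp (fun _ : Γ => ℝ) p)
    (hb : ∀ g h : Γ, b (g * h) = b g + ρ g (b h))
    (β : Λ → Y → Γ)
    (hcoc : ∀ l₁ l₂ : Λ, ∀ᵐ y ∂ν, β (l₁ * l₂) y = β l₁ (l₂ • y) * β l₂ y) :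
    ∀ l₁ l₂ : Λ, ∀ᵐ y ∂ν,
      b ((β (l₁ * l₂)⁻¹ y)⁻¹) =
        b ((β l₁⁻¹ y)⁻¹) + ρ ((β l₁⁻¹ y)⁻¹) (b ((β l₂⁻¹ (l₁⁻¹ • y))⁻¹)) := by
  intro l₁ l₂
  -- `β((λ₁λ₂)⁻¹, y)⁻¹ = β(λ₁⁻¹, y)⁻¹ β(λ₂⁻¹, λ₁⁻¹·y)⁻¹`, and `b` splits this product.
  filter_upwards [hcoc l₂⁻¹ l₁⁻¹] with y hy
  rw [mul_inv_rev, hy, mul_inv_rev, hb]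

/-- The map `B(λ)(y) = b(β(λ⁻¹,y)⁻¹)` is a `1`-cocycle for the induced representation
`σ`, i.e. `B(λ₁λ₂)(y) = B(λ₁)(y) + (σ(λ₁)B(λ₂))(y)` a.e., where
`(σ(λ)φ)(y) = ρ(β(λ⁻¹,y)⁻¹) φ(λ⁻¹·y)`. -/
theorem induced_cocycle_identity {Γ Λ Y : Type*} [Group Γ] [Group Λ] [MulAction Λ Y]
    [MeasurableSpace Y] (ν : Measure Y) [IsProbabilityMeasure ν]
    (hact : ∀ l : Λ, MeasurePreserving (fun y : Y => l • y) ν ν)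
    (p : ℝ≥0∞) [Fact (1 ≤ p)]
    (ρ : Γ →* (lp (fun _ : Γ => ℝ) p ≃ₗᵢ[ℝ] lp (fun _ : Γ => ℝ) p))
    (hρ : ∀ (g : Γ) (ξ : lp (fun _ : Γ => ℝ) p) (γ : Γ), (ρ g ξ : ∀ _ : Γ, ℝ) γ = ξ (γ * g))
    (b : Γ → lp (fun _ : Γ => ℝ) p)
    (hb : ∀ g h : Γ, b (g * h) = b g + ρ g (b h))
    (β : Λ → Y → Γ)
    (hcoc : ∀ l₁ l₂ : Λ, ∀ᵐ y ∂ν, β (l₁ * l₂) y = β l₁ (l₂ • y) * β l₂ y) :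
    ∀ l₁ l₂ : Λ, ∀ᵐ y ∂ν,
      b ((β (l₁ * l₂)⁻¹ y)⁻¹) =
        b ((β l₁⁻¹ y)⁻¹) + ρ ((β l₁⁻¹ y)⁻¹) (b ((β l₂⁻¹ (l₁⁻¹ • y))⁻¹)) :=
  induced_cocycle_identity_general ν p ρ b hb β hcoc
end

section
/- Let f : X → Y be the orbit-equivalence isomorphism with cocycle β : Λ × Y → Γ satisfying the cocycle identity. Then the map φ ↦ φ̃ from Lᵖ(Y, ℓᵖ(Γ)) to Lᵖ(X, ℓᵖ(Λ)) defined by (φ̃(x))(λ) = (φ(λ⁻¹·f(x)))(β(λ⁻¹, f(x))⁻¹) is a linear isometric isomorphism of Banach spaces. -/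
/-!
Write `y_λ = λ⁻¹·f(x)`. Since `β(λ⁻¹, λ·y) = β(λ, y)⁻¹` by the cocycle identity, the transfer is
`φ̃(x)(λ) = φ(y_λ)(β(λ, y_λ))`, i.e. composition with `(x, λ) ↦ (y_λ, β(λ, y_λ))`. This map
carries `μ ⊗ count` to `ν ⊗ count`: each slice `x ↦ y_λ` is measure preserving, and freeness
together with the orbit equivalence makes `λ ↦ β(λ, y)` a bijection `Λ → Γ` for a.e. `y`.
Summing `p`-th powers of coordinates, `φ ↦ φ̃` is a linear isometry. Its range is closed and
contains every `1_s ⊗ δ_λ₀`, the transfer of `y ↦ 1_B(y) δ_{β(λ₀, y)}` with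
`B = {y | f⁻¹(λ₀·y) ∈ s}`; these span a dense subspace, so the isometry is onto.
-/

open MeasureTheory Filter Function
open scoped ENNReal

section lp

variable {ι : Type*} {E : ι → Type*} [∀ i, NormedAddCommGroup (E i)] {p : ℝ≥0∞}

theorem lp.enorm_rpow_eq_tsum [Fact (1 ≤ p)] (hp : 0 < p.toReal) (v : lp E p) :
    ‖v‖ₑ ^ p.toReal = ∑' i, ‖v i‖ₑ ^ p.toReal := by
  simp_rw [← ofReal_norm, ENNReal.ofReal_rpow_of_nonneg (norm_nonneg _) hp.le]
  rw [lp.norm_rpow_eq_tsum hp,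
    ENNReal.ofReal_tsum_of_nonneg (fun _ => by positivity) ((lp.memℓp v).summable hp)]

theorem memℓp_of_tsum_enorm_rpow_ne_top (hp : 0 < p.toReal) {g : ∀ i, E i}
    (h : ∑' i, ‖g i‖ₑ ^ p.toReal ≠ ∞) : Memℓp g p := by
  simp_rw [← ofReal_norm, ENNReal.ofReal_rpow_of_nonneg (norm_nonneg _) hp.le] at h
  exact memℓp_gen <| (ENNReal.summable_toReal h).congr fun i =>
    ENNReal.toReal_ofReal (by positivity)

end lp

theorem MeasureTheory.StronglyMeasurable.measurable_uncurry_lp {Γ Y : Type*}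
    [MeasurableSpace Y] [MeasurableSpace Γ] [MeasurableSingletonClass Γ] [Countable Γ]
    {p : ℝ≥0∞} [Fact (1 ≤ p)] {ψ : Y → lp (fun _ : Γ => ℝ) p} (hψ : StronglyMeasurable ψ) :
    Measurable fun q : Y × Γ => ψ q.1 q.2 :=
  measurable_from_prod_countable_left fun γ =>
    ((lp.lipschitzWith_one_eval p γ).continuous.comp_stronglyMeasurable hψ).measurable

section surjectivity

variable {α ι 𝕜 G : Type*} [MeasurableSpace α] {μ : Measure α} {E : ι → Type*}
  [∀ i, NormedAddCommGroup (E i)] [DecidableEq ι] {p : ℝ≥0∞} [Fact (1 ≤ p)]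

theorem indicatorConstLp_mem_of_forall_single_mem (hp : p ≠ ⊤)
    {S : AddSubgroup (Lp (lp E p) p μ)} (hS : IsClosed (S : Set (Lp (lp E p) p μ)))
    {s : Set α} {hs : MeasurableSet s} {hμs : μ s ≠ ∞}
    (h : ∀ i (a : E i), indicatorConstLp p hs hμs (lp.single p i a) ∈ S) (c : lp E p) :
    indicatorConstLp p hs hμs c ∈ S := by
  have hp₀ : p ≠ 0 := (zero_lt_one.trans_le Fact.out).ne'
  let F : lp E p →+ Lp (lp E p) p μ :=
    AddMonoidHom.mk' (indicatorConstLp p hs hμs) fun _ _ => indicatorConstLp_add.symm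
  have hF : Continuous F :=
    AddMonoidHomClass.continuous_of_bound F (μ.real s ^ (1 / p.toReal)) fun c => by
      rw [AddMonoidHom.mk'_apply, norm_indicatorConstLp hp₀ hp, mul_comm]
  refine hS.mem_of_tendsto ((hF.tendsto c).comp (lp.hasSum_single hp c))
    (Eventually.of_forall fun t => ?_)
  rw [comp_apply, map_sum]
  exact S.sum_mem fun i _ => h i _

theorem LinearIsometry.surjective_of_indicatorConstLp_single_mem_range [NormedField 𝕜]
    [∀ i, NormedSpace 𝕜 (E i)] [NormedAddCommGroup G] [NormedSpace 𝕜 G] [CompleteSpace G]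
    (hp : p ≠ ⊤) (T : G →ₗᵢ[𝕜] Lp (lp E p) p μ)
    (h : ∀ (s : Set α) (hs : MeasurableSet s) (hμs : μ s ≠ ∞) i (a : E i),
      indicatorConstLp p hs hμs (lp.single p i a) ∈ LinearMap.range T.toLinearMap) :
    Surjective T := by
  have hclosed : IsClosed (LinearMap.range T.toLinearMap : Set (Lp (lp E p) p μ)) := by
    rw [LinearMap.coe_range]
    exact T.isometry.isClosedEmbedding.isClosed_range
  intro ψ
  refine LinearMap.mem_range.mp <| Lp.induction hp (· ∈ LinearMap.range T.toLinearMap)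
    (fun c s hs hμs => ?_) (fun _ _ _ _ _ h₁ h₂ => add_mem h₁ h₂) hclosed ψ
  rw [Lp.simpleFunc.coe_indicatorConst]
  exact indicatorConstLp_mem_of_forall_single_mem
    (S := (LinearMap.range T.toLinearMap).toAddSubgroup) hp hclosed (h s hs hμs.ne) c

end surjectivity

section cocycle

variable {Γ Λ X Y : Type*} [Group Γ] [Group Λ] [MulAction Γ X] [MulAction Λ Y]

theorem cocycle_injective_of_free (e : X ≃ Y) {β : Λ → Y → Γ} {y : Y}
    (hβ : ∀ l : Λ, e.symm (l • y) = β l y • e.symm y) (hfree : ∀ l : Λ, l • y = y → l = 1) :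
    Injective fun l => β l y := by
  intro l₁ l₂ h
  have h₁₂ : l₁ • y = l₂ • y := e.symm.injective (by simp only [hβ, h])
  exact (inv_mul_eq_one.mp (hfree _ (by rw [mul_smul, h₁₂, inv_smul_smul]))).symm

theorem cocycle_surjective_of_orbit_eq (e : X ≃ Y) {β : Λ → Y → Γ} {y : Y}
    (hβ : ∀ l : Λ, e.symm (l • y) = β l y • e.symm y)
    (hfree : ∀ γ : Γ, γ • e.symm y = e.symm y → γ = 1)
    (horbit : e '' MulAction.orbit Γ (e.symm y) = MulAction.orbit Λ y) :
    Surjective fun l => β l y := by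
  intro γ
  have hmem : e (γ • e.symm y) ∈ MulAction.orbit Λ y := horbit ▸ ⟨_, ⟨γ, rfl⟩, rfl⟩
  obtain ⟨l, hl : l • y = e (γ • e.symm y)⟩ := hmem
  refine ⟨l, (inv_mul_eq_one.mp (hfree _ ?_)).symm⟩
  rw [mul_smul, ← hβ, hl, e.symm_apply_apply, inv_smul_smul]

variable [MeasurableSpace X] [MeasurableSpace Y] {μ : Measure X} {ν : Measure Y}
  {β : Λ → Y → Γ}

theorem ae_cocycle_one (hcoc : ∀ l₁ l₂ : Λ, ∀ᵐ y ∂ν, β (l₁ * l₂) y = β l₁ (l₂ • y) * β l₂ y) :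
    ∀ᵐ y ∂ν, β 1 y = 1 := by
  filter_upwards [hcoc 1 1] with y hy
  rw [one_mul, one_smul] at hy
  exact left_eq_mul.mp hy

theorem ae_cocycle_inv_smul
    (hcoc : ∀ l₁ l₂ : Λ, ∀ᵐ y ∂ν, β (l₁ * l₂) y = β l₁ (l₂ • y) * β l₂ y) (l : Λ) :
    ∀ᵐ y ∂ν, β l⁻¹ (l • y) = (β l y)⁻¹ := by
  filter_upwards [hcoc l⁻¹ l, ae_cocycle_one hcoc] with y h h₁
  rw [inv_mul_cancel, h₁] at h
  exact eq_inv_of_mul_eq_one_left h.symm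

theorem ae_bijective_cocycle [Countable Λ] {f : X ≃ᵐ Y} (hf : MeasurePreserving f μ ν)
    (hfreeΓ : ∀ᵐ x ∂μ, ∀ γ : Γ, γ • x = x → γ = 1)
    (hfreeΛ : ∀ᵐ y ∂ν, ∀ l : Λ, l • y = y → l = 1)
    (horbit : ∀ᵐ x ∂μ, f '' MulAction.orbit Γ x = MulAction.orbit Λ (f x))
    (hβ : ∀ l : Λ, ∀ᵐ y ∂ν, f.symm (l • y) = β l y • f.symm y) :
    ∀ᵐ y ∂ν, Bijective fun l => β l y := by
  have hsymm := (hf.symm f).quasiMeasurePreserving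
  filter_upwards [hsymm.ae hfreeΓ, hsymm.ae horbit, ae_all_iff.mpr hβ, hfreeΛ]
    with y hfree hor hβy hfreey
  rw [f.apply_symm_apply] at hor
  exact ⟨cocycle_injective_of_free f.toEquiv hβy hfreey,
    cocycle_surjective_of_orbit_eq f.toEquiv hβy hfree hor⟩

end cocycle

section transfer

variable {Γ Λ X Y : Type*} [Group Γ] [Group Λ] [MulAction Λ Y] {p : ℝ≥0∞}

def transferCoords (f : X → Y) (β : Λ → Y → Γ) (φ : Y → lp (fun _ : Γ => ℝ) p) (x : X)
    (l : Λ) : ℝ :=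
  φ (l⁻¹ • f x) (β l⁻¹ (f x))⁻¹

open Classical in
noncomputable def transferFun (p : ℝ≥0∞) (f : X → Y) (β : Λ → Y → Γ)
    (φ : Y → lp (fun _ : Γ => ℝ) p) (x : X) : lp (fun _ : Λ => ℝ) p :=
  if h : Memℓp (transferCoords f β φ x) p then ⟨_, h⟩ else 0

theorem coe_transferFun {f : X → Y} {β : Λ → Y → Γ} {φ : Y → lp (fun _ : Γ => ℝ) p} {x : X}
    (h : Memℓp (transferCoords f β φ x) p) :
    ⇑(transferFun p f β φ x) = transferCoords f β φ x := by
  rw [transferFun, dif_pos h]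

variable [MeasurableSpace X] [MeasurableSpace Y] [MeasurableSpace Γ]
  {μ : Measure X} {ν : Measure Y}

/-- What the transfer `φ ↦ φ̃` uses of an orbit equivalence `f` and its cocycle `β`. -/
structure IsTransferCocycle (μ : Measure X) (ν : Measure Y) (f : X ≃ᵐ Y) (β : Λ → Y → Γ) :
    Prop where
  measurePreserving_smul : ∀ l : Λ, MeasurePreserving (fun y : Y => l • y) ν ν
  measurePreserving : MeasurePreserving f μ ν
  measurable : ∀ l, Measurable (β l)
  inv_smul : ∀ l, ∀ᵐ y ∂ν, β l⁻¹ (l • y) = (β l y)⁻¹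
  bijective : ∀ᵐ y ∂ν, Bijective fun l => β l y

namespace IsTransferCocycle

variable {f : X ≃ᵐ Y} {β : Λ → Y → Γ}

theorem measurePreserving_smul_comp (hT : IsTransferCocycle μ ν f β) (l : Λ) :
    MeasurePreserving (fun x => l • f x) μ ν :=
  (hT.measurePreserving_smul l).comp hT.measurePreserving

theorem memLp_indicator_single [MeasurableSingletonClass Γ] [Countable Γ] [Fact (1 ≤ p)]
    [DecidableEq Γ] (hT : IsTransferCocycle μ ν f β) {s : Set X} (hs : MeasurableSet s)
    (hμs : μ s ≠ ∞) (l₀ : Λ) (r : ℝ) :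
    MemLp (((fun y => f.symm (l₀ • y)) ⁻¹' s).indicator
      fun y => (lp.single p (β l₀ y) r : lp (fun _ : Γ => ℝ) p)) p ν := by
  have hback : MeasurePreserving (fun y => f.symm (l₀ • y)) ν μ :=
    (hT.measurePreserving.symm f).comp (hT.measurePreserving_smul l₀)
  have hB : MeasurableSet ((fun y => f.symm (l₀ • y)) ⁻¹' s) := hback.measurable hs
  have hνB : ν ((fun y => f.symm (l₀ • y)) ⁻¹' s) ≠ ∞ := by
    rwa [hback.measure_preimage hs.nullMeasurableSet]
  have hsm : StronglyMeasurable fun y => (lp.single p (β l₀ y) r : lp (fun _ : Γ => ℝ) p) :=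
    (StronglyMeasurable.of_discrete
      (f := fun γ : Γ => (lp.single p γ r : lp (fun _ : Γ => ℝ) p))).comp_measurable
      (hT.measurable l₀)
  refine (memLp_indicator_const p hB r (Or.inr hνB)).of_le
    (hsm.indicator hB).aestronglyMeasurable (Eventually.of_forall fun y => ?_)
  by_cases hy : y ∈ (fun y => f.symm (l₀ • y)) ⁻¹' s <;>
    simp [hy, lp.norm_single (zero_lt_one.trans_le Fact.out)]

variable [Countable Λ]

theorem ae_transferCoords_congr (hT : IsTransferCocycle μ ν f β)
    {φ₁ φ₂ : Y → lp (fun _ : Γ => ℝ) p} (h : φ₁ =ᵐ[ν] φ₂) :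
    ∀ᵐ x ∂μ, transferCoords f β φ₁ x = transferCoords f β φ₂ x := by
  have hl : ∀ l : Λ, ∀ᵐ x ∂μ, φ₁ (l⁻¹ • f x) = φ₂ (l⁻¹ • f x) := fun l =>
    (hT.measurePreserving_smul_comp l⁻¹).quasiMeasurePreserving.ae h
  filter_upwards [ae_all_iff.mpr hl] with x hx
  funext l
  rw [transferCoords, transferCoords, hx l]

theorem ae_transferFun_congr (hT : IsTransferCocycle μ ν f β)
    {φ₁ φ₂ : Y → lp (fun _ : Γ => ℝ) p} (h : φ₁ =ᵐ[ν] φ₂) :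
    transferFun p f β φ₁ =ᵐ[μ] transferFun p f β φ₂ := by
  filter_upwards [hT.ae_transferCoords_congr h] with x hx
  rw [transferFun, transferFun, hx]

theorem ae_transferCoords_eq (hT : IsTransferCocycle μ ν f β)
    (φ : Y → lp (fun _ : Γ => ℝ) p) :
    ∀ᵐ x ∂μ, ∀ l, transferCoords f β φ x l = φ (l⁻¹ • f x) (β l (l⁻¹ • f x)) := by
  have hl : ∀ l : Λ, ∀ᵐ x ∂μ, β l⁻¹ (l • l⁻¹ • f x) = (β l (l⁻¹ • f x))⁻¹ := fun l =>
    (hT.measurePreserving_smul_comp l⁻¹).quasiMeasurePreserving.ae (hT.inv_smul l)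
  filter_upwards [ae_all_iff.mpr hl] with x hx l
  rw [transferCoords, ← inv_inv (β l _), ← hx l, smul_inv_smul]

theorem ae_transferFun_indicator_single (hT : IsTransferCocycle μ ν f β) [DecidableEq Γ]
    [DecidableEq Λ] (s : Set X) (l₀ : Λ) (r : ℝ) :
    transferFun p f β (((fun y => f.symm (l₀ • y)) ⁻¹' s).indicator
        fun y => (lp.single p (β l₀ y) r : lp (fun _ : Γ => ℝ) p))
      =ᵐ[μ] s.indicator fun _ => lp.single p l₀ r := by
  set φ := ((fun y => f.symm (l₀ • y)) ⁻¹' s).indicator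
    fun y => (lp.single p (β l₀ y) r : lp (fun _ : Γ => ℝ) p)
  have hinj : ∀ l : Λ, ∀ᵐ x ∂μ, Injective fun m => β m (l⁻¹ • f x) := fun l =>
    (hT.measurePreserving_smul_comp l⁻¹).quasiMeasurePreserving.ae
      (hT.bijective.mono fun _ hy => hy.1)
  filter_upwards [hT.ae_transferCoords_eq φ, ae_all_iff.mpr hinj] with x hx hinj
  have hcoords : transferCoords f β φ x = ⇑(s.indicator (fun _ => lp.single p l₀ r) x) := by
    funext l
    rw [hx l]
    by_cases hl : l = l₀
    · subst hl
      by_cases hxs : x ∈ s <;> simp [φ, hxs]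
    · have hne : β l (l⁻¹ • f x) ≠ β l₀ (l⁻¹ • f x) := fun h => hl (hinj l h)
      have hzero : φ (l⁻¹ • f x) (β l (l⁻¹ • f x)) = 0 := by
        simp only [φ]
        by_cases hy : l⁻¹ • f x ∈ (fun y => f.symm (l₀ • y)) ⁻¹' s
        · rw [Set.indicator_of_mem hy]
          exact lp.single_apply_ne p _ _ hne
        · rw [Set.indicator_of_notMem hy]
          rfl
      rw [hzero]
      by_cases hxs : x ∈ s <;> simp [hxs, hl]
  exact lp.ext ((coe_transferFun (hcoords ▸ lp.memℓp _)).trans hcoords)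

theorem lintegral_tsum_comp (hT : IsTransferCocycle μ ν f β) {h : Y → Γ → ℝ≥0∞}
    (hh : Measurable fun q : Y × Γ => h q.1 q.2) :
    ∫⁻ x, ∑' l, h (l⁻¹ • f x) (β l (l⁻¹ • f x)) ∂μ = ∫⁻ y, ∑' γ, h y γ ∂ν := by
  have hmeas : ∀ l, Measurable fun y => h y (β l y) := fun l =>
    hh.comp (measurable_id.prodMk (hT.measurable l))
  have hmeas' : ∀ l, Measurable fun x => h (l⁻¹ • f x) (β l (l⁻¹ • f x)) := fun l =>
    (hmeas l).comp (hT.measurePreserving_smul_comp l⁻¹).measurable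
  calc ∫⁻ x, ∑' l, h (l⁻¹ • f x) (β l (l⁻¹ • f x)) ∂μ
      = ∑' l, ∫⁻ y, h y (β l y) ∂ν := by
        rw [lintegral_tsum fun l => (hmeas' l).aemeasurable]
        exact tsum_congr fun l => (hT.measurePreserving_smul_comp l⁻¹).lintegral_comp (hmeas l)
    _ = ∫⁻ y, ∑' l, h y (β l y) ∂ν := (lintegral_tsum fun l => (hmeas l).aemeasurable).symm
    _ = ∫⁻ y, ∑' γ, h y γ ∂ν := lintegral_congr_ae <|
        hT.bijective.mono fun y hy => (Equiv.ofBijective _ hy).tsum_eq (h y)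

variable [MeasurableSingletonClass Γ] [Countable Γ] [Fact (1 ≤ p)]

theorem aemeasurable_transferCoords (hT : IsTransferCocycle μ ν f β)
    {φ : Y → lp (fun _ : Γ => ℝ) p} (hφ : AEStronglyMeasurable φ ν) (l : Λ) :
    AEMeasurable (fun x => transferCoords f β φ x l) μ := by
  refine ⟨fun x => transferCoords f β (hφ.mk φ) x l, ?_, ?_⟩
  · exact hφ.stronglyMeasurable_mk.measurable_uncurry_lp.comp
      ((hT.measurePreserving_smul_comp l⁻¹).measurable.prodMk
        ((measurable_of_countable _).comp ((hT.measurable l⁻¹).comp f.measurable)))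
  · filter_upwards [hT.ae_transferCoords_congr hφ.ae_eq_mk] with x hx
    rw [hx]

theorem lintegral_tsum_enorm_rpow_transferCoords
    (hT : IsTransferCocycle μ ν f β) (hp : 0 < p.toReal) {φ : Y → lp (fun _ : Γ => ℝ) p}
    (hφ : AEStronglyMeasurable φ ν) :
    ∫⁻ x, ∑' l, ‖transferCoords f β φ x l‖ₑ ^ p.toReal ∂μ = ∫⁻ y, ‖φ y‖ₑ ^ p.toReal ∂ν := by
  calc ∫⁻ x, ∑' l, ‖transferCoords f β φ x l‖ₑ ^ p.toReal ∂μ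
      = ∫⁻ x, ∑' l, ‖hφ.mk φ (l⁻¹ • f x) (β l (l⁻¹ • f x))‖ₑ ^ p.toReal ∂μ := by
        refine lintegral_congr_ae ?_
        filter_upwards [hT.ae_transferCoords_congr hφ.ae_eq_mk,
          hT.ae_transferCoords_eq (hφ.mk φ)] with x h₁ h₂
        simp only [h₁, h₂]
    _ = ∫⁻ y, ∑' γ, ‖hφ.mk φ y γ‖ₑ ^ p.toReal ∂ν :=
        hT.lintegral_tsum_comp (h := fun y γ => ‖hφ.mk φ y γ‖ₑ ^ p.toReal)
          (hφ.stronglyMeasurable_mk.measurable_uncurry_lp.enorm.pow_const _)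
    _ = ∫⁻ y, ‖φ y‖ₑ ^ p.toReal ∂ν := by
        refine lintegral_congr_ae ?_
        filter_upwards [hφ.ae_eq_mk] with y hy
        rw [hy, lp.enorm_rpow_eq_tsum hp]

theorem ae_memℓp_transferCoords (hT : IsTransferCocycle μ ν f β) (hp : p ≠ ⊤)
    {φ : Y → lp (fun _ : Γ => ℝ) p} (hφ : MemLp φ p ν) :
    ∀ᵐ x ∂μ, Memℓp (transferCoords f β φ x) p := by
  have hp₀ : p ≠ 0 := (zero_lt_one.trans_le Fact.out).ne'
  have hq : 0 < p.toReal := ENNReal.toReal_pos hp₀ hp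
  have hfin : ∫⁻ x, ∑' l, ‖transferCoords f β φ x l‖ₑ ^ p.toReal ∂μ ≠ ∞ := by
    rw [hT.lintegral_tsum_enorm_rpow_transferCoords hq hφ.1]
    exact (lintegral_rpow_enorm_lt_top_of_eLpNorm_lt_top hp₀ hp hφ.2).ne
  have hmeas : AEMeasurable (fun x => ∑' l, ‖transferCoords f β φ x l‖ₑ ^ p.toReal) μ :=
    AEMeasurable.tsum fun l => (hT.aemeasurable_transferCoords hφ.1 l).enorm.pow_const _
  filter_upwards [ae_lt_top' hmeas hfin] with x hx
  exact memℓp_of_tsum_enorm_rpow_ne_top hq hx.ne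

theorem eLpNorm_transferFun (hT : IsTransferCocycle μ ν f β) (hp : p ≠ ⊤)
    {φ : Y → lp (fun _ : Γ => ℝ) p} (hφ : MemLp φ p ν) :
    eLpNorm (transferFun p f β φ) p μ = eLpNorm φ p ν := by
  have hp₀ : p ≠ 0 := (zero_lt_one.trans_le Fact.out).ne'
  have hq : 0 < p.toReal := ENNReal.toReal_pos hp₀ hp
  rw [eLpNorm_eq_lintegral_rpow_enorm_toReal hp₀ hp,
    eLpNorm_eq_lintegral_rpow_enorm_toReal hp₀ hp,
    ← hT.lintegral_tsum_enorm_rpow_transferCoords hq hφ.1]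
  congr 1
  refine lintegral_congr_ae ?_
  filter_upwards [hT.ae_memℓp_transferCoords hp hφ] with x hx
  rw [lp.enorm_rpow_eq_tsum hq, coe_transferFun hx]

theorem aestronglyMeasurable_transferFun (hT : IsTransferCocycle μ ν f β)
    (hp : p ≠ ⊤) {φ : Y → lp (fun _ : Γ => ℝ) p} (hφ : MemLp φ p ν) :
    AEStronglyMeasurable (transferFun p f β φ) μ := by
  classical
  refine aestronglyMeasurable_of_tendsto_ae atTop
    (f := fun (s : Finset Λ) x => ∑ l ∈ s, lp.single p l (transferCoords f β φ x l))
    (fun s => ?_) ?_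
  · exact Finset.aestronglyMeasurable_fun_sum s fun l _ =>
      (lp.isometry_single l).continuous.comp_aestronglyMeasurable
        (hT.aemeasurable_transferCoords hφ.1 l).aestronglyMeasurable
  · filter_upwards [hT.ae_memℓp_transferCoords hp hφ] with x hx
    have hsum := lp.hasSum_single hp (transferFun p f β φ x)
    rw [coe_transferFun hx] at hsum
    exact hsum

theorem memLp_transferFun (hT : IsTransferCocycle μ ν f β) (hp : p ≠ ⊤)
    {φ : Y → lp (fun _ : Γ => ℝ) p} (hφ : MemLp φ p ν) :
    MemLp (transferFun p f β φ) p μ :=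
  ⟨hT.aestronglyMeasurable_transferFun hp hφ, hT.eLpNorm_transferFun hp hφ ▸ hφ.2⟩

theorem ae_transferFun_add (hT : IsTransferCocycle μ ν f β) (hp : p ≠ ⊤)
    {φ₁ φ₂ : Y → lp (fun _ : Γ => ℝ) p} (h₁ : MemLp φ₁ p ν) (h₂ : MemLp φ₂ p ν) :
    transferFun p f β (φ₁ + φ₂) =ᵐ[μ] transferFun p f β φ₁ + transferFun p f β φ₂ := by
  filter_upwards [hT.ae_memℓp_transferCoords hp h₁, hT.ae_memℓp_transferCoords hp h₂]
    with x hx₁ hx₂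
  have hadd : transferCoords f β (φ₁ + φ₂) x =
      transferCoords f β φ₁ x + transferCoords f β φ₂ x := rfl
  refine lp.ext ?_
  rw [Pi.add_apply, lp.coeFn_add, coe_transferFun (hadd ▸ hx₁.add hx₂), coe_transferFun hx₁,
    coe_transferFun hx₂, hadd]

theorem ae_transferFun_smul (hT : IsTransferCocycle μ ν f β) (hp : p ≠ ⊤) (c : ℝ)
    {φ : Y → lp (fun _ : Γ => ℝ) p} (hφ : MemLp φ p ν) :
    transferFun p f β (c • φ) =ᵐ[μ] c • transferFun p f β φ := by
  filter_upwards [hT.ae_memℓp_transferCoords hp hφ] with x hx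
  have hsmul : transferCoords f β (c • φ) x = c • transferCoords f β φ x := rfl
  refine lp.ext ?_
  rw [Pi.smul_apply, lp.coeFn_smul, coe_transferFun (hsmul ▸ hx.const_smul c),
    coe_transferFun hx, hsmul]

noncomputable def transferLp (hT : IsTransferCocycle μ ν f β) (hp : p ≠ ⊤) :
    Lp (lp (fun _ : Γ => ℝ) p) p ν →ₗᵢ[ℝ] Lp (lp (fun _ : Λ => ℝ) p) p μ where
  toFun φ := MemLp.toLp _ (hT.memLp_transferFun hp (Lp.memLp φ))
  map_add' φ₁ φ₂ := by
    rw [← MemLp.toLp_add]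
    exact MemLp.toLp_congr _ _ <| (hT.ae_transferFun_congr (Lp.coeFn_add φ₁ φ₂)).trans
      (hT.ae_transferFun_add hp (Lp.memLp φ₁) (Lp.memLp φ₂))
  map_smul' c φ := by
    rw [RingHom.id_apply, ← MemLp.toLp_const_smul]
    exact MemLp.toLp_congr _ _ <| (hT.ae_transferFun_congr (Lp.coeFn_smul c φ)).trans
      (hT.ae_transferFun_smul hp c (Lp.memLp φ))
  norm_map' φ := by
    rw [LinearMap.coe_mk, AddHom.coe_mk, Lp.norm_toLp, hT.eLpNorm_transferFun hp (Lp.memLp φ),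
      Lp.norm_def]

theorem coeFn_transferLp (hT : IsTransferCocycle μ ν f β) (hp : p ≠ ⊤)
    (φ : Lp (lp (fun _ : Γ => ℝ) p) p ν) :
    hT.transferLp hp φ =ᵐ[μ] transferFun p f β φ :=
  MemLp.coeFn_toLp (hT.memLp_transferFun hp (Lp.memLp φ))

theorem ae_transferLp_apply (hT : IsTransferCocycle μ ν f β) (hp : p ≠ ⊤)
    (φ : Lp (lp (fun _ : Γ => ℝ) p) p ν) :
    ∀ᵐ x ∂μ, ∀ l : Λ, (hT.transferLp hp φ : X → lp (fun _ : Λ => ℝ) p) x l =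
      (φ : Y → lp (fun _ : Γ => ℝ) p) (l⁻¹ • f x) ((β l⁻¹ (f x))⁻¹) := by
  filter_upwards [hT.coeFn_transferLp hp φ, hT.ae_memℓp_transferCoords hp (Lp.memLp φ)]
    with x h₁ h₂ l
  rw [h₁, coe_transferFun h₂, transferCoords]

theorem indicatorConstLp_single_mem_range_transferLp (hT : IsTransferCocycle μ ν f β)
    [DecidableEq Λ] (hp : p ≠ ⊤) {s : Set X} (hs : MeasurableSet s) (hμs : μ s ≠ ∞) (l₀ : Λ)
    (r : ℝ) :
    indicatorConstLp p hs hμs (lp.single p l₀ r) ∈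
      LinearMap.range (hT.transferLp hp).toLinearMap := by
  classical
  have hφ := hT.memLp_indicator_single (p := p) hs hμs l₀ r
  refine ⟨hφ.toLp _, Lp.ext ?_⟩
  exact (hT.coeFn_transferLp hp _).trans <| (hT.ae_transferFun_congr hφ.coeFn_toLp).trans <|
    (hT.ae_transferFun_indicator_single s l₀ r).trans indicatorConstLp_coeFn.symm

theorem surjective_transferLp (hT : IsTransferCocycle μ ν f β) (hp : p ≠ ⊤) :
    Surjective (hT.transferLp hp) := by
  classical
  exact (hT.transferLp hp).surjective_of_indicatorConstLp_single_mem_range hp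
    fun _ hs hμs l₀ r => hT.indicatorConstLp_single_mem_range_transferLp hp hs hμs l₀ r

end IsTransferCocycle

end transfer

theorem oe_transfer_isometry_general {Γ Λ X Y : Type*} [Group Γ] [Group Λ]
    [MulAction Γ X] [MulAction Λ Y]
    [MeasurableSpace X] [MeasurableSpace Y]
    [MeasurableSpace Γ] [MeasurableSingletonClass Γ] [Countable Γ] [Countable Λ]
    (μ : Measure X) (ν : Measure Y)
    (hactΛ : ∀ l : Λ, MeasurePreserving (fun y : Y => l • y) ν ν)
    (f : X ≃ᵐ Y) (hf : MeasurePreserving f μ ν)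
    (hfreeΓ : ∀ᵐ x ∂μ, ∀ γ : Γ, γ • x = x → γ = 1)
    (hfreeΛ : ∀ᵐ y ∂ν, ∀ l : Λ, l • y = y → l = 1)
    (horbit : ∀ᵐ x ∂μ, f '' (MulAction.orbit Γ x) = MulAction.orbit Λ (f x))
    (β : Λ → Y → Γ) (hβmeas : ∀ l : Λ, Measurable (β l))
    (hβ : ∀ l : Λ, ∀ᵐ y ∂ν, f.symm (l • y) = β l y • f.symm y)
    (hcoc : ∀ l₁ l₂ : Λ, ∀ᵐ y ∂ν, β (l₁ * l₂) y = β l₁ (l₂ • y) * β l₂ y)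
    (p : ℝ≥0∞) [Fact (1 ≤ p)] (hp : p ≠ ⊤) :
    ∃ T : Lp (lp (fun _ : Γ => ℝ) p) p ν ≃ₗᵢ[ℝ] Lp (lp (fun _ : Λ => ℝ) p) p μ,
      ∀ φ : Lp (lp (fun _ : Γ => ℝ) p) p ν, ∀ᵐ x ∂μ, ∀ l : Λ,
        (T φ : X → lp (fun _ : Λ => ℝ) p) x l =
          (φ : Y → lp (fun _ : Γ => ℝ) p) (l⁻¹ • f x) ((β l⁻¹ (f x))⁻¹) := by
  have hT : IsTransferCocycle μ ν f β :=
    { measurePreserving_smul := hactΛ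
      measurePreserving := hf
      measurable := hβmeas
      inv_smul := ae_cocycle_inv_smul hcoc
      bijective := ae_bijective_cocycle hf hfreeΓ hfreeΛ horbit hβ }
  exact ⟨.ofSurjective _ (hT.surjective_transferLp hp), hT.ae_transferLp_apply hp⟩

/-- The map `φ ↦ φ̃`, `(φ̃(x))(λ) = (φ(λ⁻¹·f(x)))(β(λ⁻¹,f(x))⁻¹)`, is a linear
isometric isomorphism from `Lᵖ(Y, ℓᵖ(Γ))` onto `Lᵖ(X, ℓᵖ(Λ))`, where `f : X → Y` is
the orbit-equivalence isomorphism with cocycle `β : Λ × Y → Γ`. -/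
theorem oe_transfer_isometry {Γ Λ X Y : Type*} [Group Γ] [Group Λ]
    [MulAction Γ X] [MulAction Λ Y]
    [MeasurableSpace X] [MeasurableSpace Y]
    [MeasurableSpace Γ] [MeasurableSingletonClass Γ] [Countable Γ] [Countable Λ]
    (μ : Measure X) (ν : Measure Y) [IsProbabilityMeasure μ] [IsProbabilityMeasure ν]
    (hactΓ : ∀ γ : Γ, MeasurePreserving (fun x : X => γ • x) μ μ)
    (hactΛ : ∀ l : Λ, MeasurePreserving (fun y : Y => l • y) ν ν)
    (f : X ≃ᵐ Y) (hf : MeasurePreserving f μ ν)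
    (hfreeΓ : ∀ᵐ x ∂μ, ∀ γ : Γ, γ • x = x → γ = 1)
    (hfreeΛ : ∀ᵐ y ∂ν, ∀ l : Λ, l • y = y → l = 1)
    (horbit : ∀ᵐ x ∂μ, f '' (MulAction.orbit Γ x) = MulAction.orbit Λ (f x))
    (β : Λ → Y → Γ) (hβmeas : ∀ l : Λ, Measurable (β l))
    (hβ : ∀ l : Λ, ∀ᵐ y ∂ν, f.symm (l • y) = β l y • f.symm y)
    (hcoc : ∀ l₁ l₂ : Λ, ∀ᵐ y ∂ν, β (l₁ * l₂) y = β l₁ (l₂ • y) * β l₂ y)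
    (p : ℝ≥0∞) [Fact (1 ≤ p)] (hp : p ≠ ⊤) :
    ∃ T : Lp (lp (fun _ : Γ => ℝ) p) p ν ≃ₗᵢ[ℝ] Lp (lp (fun _ : Λ => ℝ) p) p μ,
      ∀ φ : Lp (lp (fun _ : Γ => ℝ) p) p ν, ∀ᵐ x ∂μ, ∀ l : Λ,
        (T φ : X → lp (fun _ : Λ => ℝ) p) x l =
          (φ : Y → lp (fun _ : Γ => ℝ) p) (l⁻¹ • f x) ((β l⁻¹ (f x))⁻¹) :=
  oe_transfer_isometry_general μ ν hactΛ f hf hfreeΓ hfreeΛ horbit β hβmeas hβ hcoc p hp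
end

section
/- With the above identification, the map φ ↦ φ̃ intertwines the induced representation σ of Λ on Lᵖ(Y, ℓᵖ(Γ)) with the representation σ̃ on Lᵖ(X, ℓᵖ(Λ)) given by (σ̃(λ)ψ)(x) = ρ_Λ(λ)(ψ(x)), i.e., (σ(λ)φ)~ = σ̃(λ) φ̃ for all λ ∈ Λ. In particular the computation reduces to the cocycle identity β(λ⁻¹λ̲⁻¹, f(x)) = β(λ⁻¹, λ̲⁻¹·f(x)) β(λ̲⁻¹, f(x)). -/
section

variable {X Y Γ Λ : Type*} [Group Γ] [Group Λ] [MulAction Λ Y]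

/-- The transfer map `φ ↦ φ̃` : `(φ̃(x))(λ̲) = (φ(λ̲⁻¹·f(x)))(β(λ̲⁻¹, f(x))⁻¹)`. -/
def tildeMap (f : X → Y) (β : Λ → Y → Γ) (φ : Y → Γ → ℝ) : X → Λ → ℝ :=
  fun x lb => φ (lb⁻¹ • f x) ((β lb⁻¹ (f x))⁻¹)

/-- The induced representation `σ` of `Λ` : `(σ(λ)φ)(y) = ρ_Γ(β(λ⁻¹,y)⁻¹) φ(λ⁻¹·y)`,
where `ρ_Γ` is the right regular representation, `(ρ_Γ(g)ξ)(γ) = ξ(γg)`. -/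
def sigmaRep (β : Λ → Y → Γ) (l : Λ) (φ : Y → Γ → ℝ) : Y → Γ → ℝ :=
  fun y γ => φ (l⁻¹ • y) (γ * (β l⁻¹ y)⁻¹)

/-- The representation `σ̃` of `Λ` : `(σ̃(λ)ψ)(x) = ρ_Λ(λ)(ψ(x))`, with `ρ_Λ` the
right regular representation of `Λ`. -/
def sigmaTildeRep (l : Λ) (ψ : X → Λ → ℝ) : X → Λ → ℝ :=
  fun x lb => ψ x (lb * l)

/-- The map `φ ↦ φ̃` intertwines the induced representation `σ` with `σ̃`:
`(σ(λ)φ)~ = σ̃(λ) φ̃`; the computation reduces to the cocycle identity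
`β(λ⁻¹λ̲⁻¹, f(x)) = β(λ⁻¹, λ̲⁻¹·f(x)) β(λ̲⁻¹, f(x))`. -/
theorem tilde_intertwines (f : X → Y) (β : Λ → Y → Γ)
    (hcoc : ∀ (l₁ l₂ : Λ) (y : Y), β (l₁ * l₂) y = β l₁ (l₂ • y) * β l₂ y) :
    ∀ (l : Λ) (φ : Y → Γ → ℝ),
      tildeMap f β (sigmaRep β l φ) = sigmaTildeRep l (tildeMap f β φ) := by
  intro l φ
  funext x lb
  show φ (l⁻¹ • lb⁻¹ • f x) ((β lb⁻¹ (f x))⁻¹ * (β l⁻¹ (lb⁻¹ • f x))⁻¹) =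
    φ ((lb * l)⁻¹ • f x) (β (lb * l)⁻¹ (f x))⁻¹
  rw [mul_inv_rev, hcoc, mul_inv_rev, smul_smul]

end
end
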